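/- Let n ≥ 3 and Γ̃ = {z ∈ ℂ^{n+1} : Re z_1 > 0 and Re z_{n+1} = (Re z_1)(Re z_2) + (Re z_1) Σ_{j=3}^n (Re z_j)²}. For t ∈ ℝ and z ∈ Γ̃, set D = e^{−it} z_1 + e^{−it} − z_1 + 1. Then D ≠ 0, and the point φ_t(z) with coordinates φ_t(z)_1 = (e^{−it} z_1 + e^{−it} + z_1 − 1)/D, φ_t(z)_2 = −(−e^{−it} z_1 z_2 + 2 e^{−it} z_{n+1} − e^{−it} z_2 + z_1 z_2 − 2 z_{n+1} − z_2)/D, φ_t(z)_j = z_j for 3 ≤ j ≤ n, and φ_t(z)_{n+1} = 4 e^{−it} z_{n+1}/D², again lies in Γ̃. Moreover φ_t fixes the point p₀ = (1, 0, …, 0). -/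

import Mathlib

/-- The tube hypersurface `Γ̃ = {z ∈ ℂ^{n+1} : Re z₁ > 0,
Re z_{n+1} = (Re z₁)(Re z₂) + (Re z₁) Σ_{j=3}^n (Re z_j)²}` (0-indexed coordinates). -/
def tubeGamma (n : ℕ) (hn : 3 ≤ n) : Set (Fin (n + 1) → ℂ) :=
  {z | 0 < (z 0).re ∧ (z (Fin.last n)).re = (z 0).re * (z ⟨1, by omega⟩).re +
    (z 0).re * ∑ j : Fin (n + 1), (if 2 ≤ (j : ℕ) ∧ (j : ℕ) < n then (z j).re ^ 2 else 0)}

/-- The denominator `D = e^{−it} z₁ + e^{−it} − z₁ + 1`. -/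
noncomputable def Dden (t : ℝ) (z1 : ℂ) : ℂ :=
  Complex.exp (-Complex.I * t) * z1 + Complex.exp (-Complex.I * t) - z1 + 1

/-- The map `φ_t` with coordinates
`φ_t(z)₁ = (e^{−it} z₁ + e^{−it} + z₁ − 1)/D`,
`φ_t(z)₂ = −(−e^{−it} z₁ z₂ + 2 e^{−it} z_{n+1} − e^{−it} z₂ + z₁ z₂ − 2 z_{n+1} − z₂)/D`,
`φ_t(z)_j = z_j` for `3 ≤ j ≤ n`, and `φ_t(z)_{n+1} = 4 e^{−it} z_{n+1}/D²`. -/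
noncomputable def phiT (n : ℕ) (t : ℝ) (z : Fin (n + 1) → ℂ) : Fin (n + 1) → ℂ := fun i =>
  if (i : ℕ) = 0 then
    (Complex.exp (-Complex.I * t) * z 0 + Complex.exp (-Complex.I * t) + z 0 - 1) /
      Dden t (z 0)
  else if (i : ℕ) = 1 then
    -(-(Complex.exp (-Complex.I * t)) * z 0 * z i
        + 2 * Complex.exp (-Complex.I * t) * z (Fin.last n)
        - Complex.exp (-Complex.I * t) * z i
        + z 0 * z i - 2 * z (Fin.last n) - z i) / Dden t (z 0)
  else if (i : ℕ) = n then
    4 * Complex.exp (-Complex.I * t) * z i / (Dden t (z 0)) ^ 2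
  else z i

/-! With `e = e^{-it}` and `D = e (z₁ + 1) - (z₁ - 1)`, the first coordinate of `φ_t` is the
rotation `c ↦ ē c` of the unit disc transported to the right half-plane by the Cayley transform
`w ↦ (w - 1)/(w + 1)`, and `Re φ_t(z)₁ = (|z₁ + 1|² - |z₁ - 1|²)/|D|² = 4 Re z₁/|D|²`; in
particular `D ≠ 0` and `Re φ_t(z)₁ > 0`. The second coordinate is `z₂ - 2 (e - 1) z_{n+1}/D`.
Because `|e| = 1` one has `e D̄ + 2 Re z₁ (e - 1) = D`, so
`4 e z_{n+1}/D² = (4/|D|²) (z_{n+1} - 2 Re z₁ (e - 1) z_{n+1}/D)`; taking real parts turns the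
defining equation of `Γ̃` at `z` into the one at `φ_t(z)`. -/

open Complex ComplexConjugate

theorem re_add_div_sub (A B : ℂ) :
    ((A + B) / (A - B)).re = (normSq A - normSq B) / normSq (A - B) := by
  rw [div_re, ← add_div]
  congr 1
  simp only [normSq_apply, add_re, add_im, sub_re, sub_im]
  ring

theorem normSq_add_one_sub_normSq_sub_one (w : ℂ) :
    normSq (w + 1) - normSq (w - 1) = 4 * w.re := by
  simp only [normSq_apply, add_re, add_im, sub_re, sub_im, one_re, one_im]
  ring

section HalfPlaneRot

variable {e w : ℂ}

theorem halfPlaneRotDen_ne_zero (he : normSq e = 1) (hw : 0 < w.re) :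
    e * (w + 1) - (w - 1) ≠ 0 := by
  intro h
  have := congrArg normSq (sub_eq_zero.mp h)
  rw [map_mul, he, one_mul] at this
  have := normSq_add_one_sub_normSq_sub_one w
  linarith

theorem re_halfPlaneRot (he : normSq e = 1) :
    ((e * (w + 1) + (w - 1)) / (e * (w + 1) - (w - 1))).re =
      4 * w.re / normSq (e * (w + 1) - (w - 1)) := by
  rw [re_add_div_sub, map_mul, he, one_mul, normSq_add_one_sub_normSq_sub_one]

theorem mul_conj_halfPlaneRotDen_add (he : normSq e = 1) :
    e * conj (e * (w + 1) - (w - 1)) + 2 * w.re * (e - 1) = e * (w + 1) - (w - 1) := by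
  have hconj : e * conj e = 1 := by rw [mul_conj, he, ofReal_one]
  have hre : (2 * w.re : ℂ) = w + conj w := by rw [add_conj]; push_cast; ring
  simp only [map_sub, map_mul, map_add, map_one]
  rw [hre]
  linear_combination (conj w + 1) * hconj

theorem div_halfPlaneRotDen_sq (he : normSq e = 1) (hD : e * (w + 1) - (w - 1) ≠ 0) (ζ : ℂ) :
    4 * e * ζ / (e * (w + 1) - (w - 1)) ^ 2 =
      ((4 / normSq (e * (w + 1) - (w - 1)) : ℝ) : ℂ) *
        (ζ - 2 * w.re * ((e - 1) * ζ / (e * (w + 1) - (w - 1)))) := by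
  have key := mul_conj_halfPlaneRotDen_add (w := w) he
  set D := e * (w + 1) - (w - 1)
  have hN : (normSq D : ℂ) = D * conj D := (mul_conj D).symm
  have hc : conj D ≠ 0 := by simpa using hD
  push_cast
  rw [hN]
  field_simp
  linear_combination ζ * key

theorem halfPlaneRot_preserves_tube_relation (he : normSq e = 1)
    (hD : e * (w + 1) - (w - 1) ≠ 0) {z₂ ζ : ℂ} {S : ℝ} (h : ζ.re = w.re * z₂.re + w.re * S) :
    (4 * e * ζ / (e * (w + 1) - (w - 1)) ^ 2).re =
      ((e * (w + 1) + (w - 1)) / (e * (w + 1) - (w - 1))).re *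
          (z₂ - 2 * ((e - 1) * ζ / (e * (w + 1) - (w - 1)))).re +
        ((e * (w + 1) + (w - 1)) / (e * (w + 1) - (w - 1))).re * S := by
  rw [div_halfPlaneRotDen_sq he hD, re_halfPlaneRot he]
  set D := e * (w + 1) - (w - 1)
  have hN : normSq D ≠ 0 := by simpa using hD
  simp only [sub_re, mul_re, mul_im, re_ofNat, im_ofNat, ofReal_re, ofReal_im, zero_mul,
    mul_zero, sub_zero, add_zero]
  field_simp
  linear_combination h

end HalfPlaneRot

theorem normSq_exp_neg_I_mul (t : ℝ) : normSq (exp (-I * t)) = 1 := by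
  simp [normSq_eq_norm_sq, norm_exp]

theorem Dden_eq (t : ℝ) (w : ℂ) : Dden t w = exp (-I * t) * (w + 1) - (w - 1) := by
  unfold Dden; ring

section phiT

variable (n : ℕ) (t : ℝ) (z : Fin (n + 1) → ℂ)

theorem phiT_zero : phiT n t z 0 = (exp (-I * t) * (z 0 + 1) + (z 0 - 1)) / Dden t (z 0) := by
  simp only [phiT, Fin.val_zero, if_true]
  ring

theorem phiT_one (h : 1 < n + 1) (hD : Dden t (z 0) ≠ 0) :
    phiT n t z ⟨1, h⟩ =
      z ⟨1, h⟩ - 2 * ((exp (-I * t) - 1) * z (Fin.last n) / Dden t (z 0)) := by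
  simp only [phiT, one_ne_zero, if_false, if_true]
  rw [mul_div_assoc', sub_div' hD, Dden]
  ring

theorem phiT_last (hn : 2 ≤ n) :
    phiT n t z (Fin.last n) = 4 * exp (-I * t) * z (Fin.last n) / Dden t (z 0) ^ 2 := by
  simp only [phiT, Fin.val_last, if_true]
  rw [if_neg (by omega), if_neg (by omega)]

theorem phiT_of_two_le_of_lt {j : Fin (n + 1)} (h2 : 2 ≤ (j : ℕ)) (hj : (j : ℕ) < n) :
    phiT n t z j = z j := by
  simp only [phiT]
  rw [if_neg (by omega), if_neg (by omega), if_neg (by omega)]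

theorem phiT_basePoint :
    phiT n t (fun i => if (i : ℕ) = 0 then 1 else 0) =
      fun i : Fin (n + 1) => if (i : ℕ) = 0 then (1 : ℂ) else 0 := by
  funext i
  by_cases h0 : (i : ℕ) = 0
  · simp [phiT, h0, Dden]
  · have hn : n ≠ 0 := by omega
    simp [phiT, h0, hn]

theorem sum_middle_phiT :
    ∑ j : Fin (n + 1), (if 2 ≤ (j : ℕ) ∧ (j : ℕ) < n then (phiT n t z j).re ^ 2 else 0) =
      ∑ j : Fin (n + 1), (if 2 ≤ (j : ℕ) ∧ (j : ℕ) < n then (z j).re ^ 2 else 0) :=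
  Finset.sum_congr rfl fun j _ => by
    split_ifs with hj
    · rw [phiT_of_two_le_of_lt n t z hj.1 hj.2]
    · rfl

end phiT

/-- For each `t ∈ ℝ`: for every `z ∈ Γ̃` the denominator `D` is nonzero and `φ_t(z) ∈ Γ̃`;
moreover `φ_t` fixes the point `p₀ = (1, 0, …, 0)`. -/
theorem phiT_maps_tubeGamma (n : ℕ) (hn : 3 ≤ n) (t : ℝ) :
    (∀ z ∈ tubeGamma n hn, Dden t (z 0) ≠ 0 ∧ phiT n t z ∈ tubeGamma n hn) ∧
    phiT n t (fun i => if (i : ℕ) = 0 then 1 else 0) =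
      (fun i : Fin (n + 1) => if (i : ℕ) = 0 then (1 : ℂ) else 0) := by
  refine ⟨fun z ⟨hre, hrel⟩ => ?_, phiT_basePoint n t⟩
  have he := normSq_exp_neg_I_mul t
  have hD := halfPlaneRotDen_ne_zero he hre
  have hDden : Dden t (z 0) ≠ 0 := by rwa [Dden_eq]
  refine ⟨hDden, ?_, ?_⟩
  · rw [phiT_zero, Dden_eq, re_halfPlaneRot he]
    exact div_pos (by linarith) (normSq_pos.mpr hD)
  · rw [phiT_last n t z (by omega), phiT_one n t z _ hDden, phiT_zero, sum_middle_phiT,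
      Dden_eq]
    exact halfPlaneRot_preserves_tube_relation he hD hrel
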